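/- Let Q be a real symmetric positive semidefinite n×n matrix and b ∈ ℝⁿ, and let f(x) = (1/2)xᵀQx + bᵀx. For x ∈ {−1,1}ⁿ with X = diag(x) and e the all-ones vector, the following are equivalent: (i) x is simultaneously a global minimizer of f over {−1,1}ⁿ and a global minimizer of f over [−1,1]ⁿ; (ii) XQXe + Xb ≤ 0 componentwise. -/

import Mathlib

open Matrix Set

/-
Expand `f` around `x`: `f (x + d) = f x + g ⬝ᵥ d + ½ dᵀ Q d` with gradient `g = Q x + b`.
Since `x i = ±1`, the condition `X Q X e + X b ≤ 0` reads `x i * g i ≤ 0`. If it holds, then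
for every `z` in the box each term `g i * (z i - x i) = (x i * g i) * (x i * z i - 1)` is a
product of two nonpositive numbers, so the linear term is nonnegative, and so is the quadratic one
since `Q` is positive semidefinite: `x` minimizes `f` over the box, hence over `{−1,1}ⁿ`.
Conversely, moving coordinate `i` of a box minimizer `x` towards `-x i` by `2t` changes `f` by
`-2t x i g i + 2t² Q i i`, which stays nonnegative for all small `t > 0` only if `x i * g i ≤ 0`.
-/

variable {ι : Type*}

lemma mem_Icc_neg_one_one_iff {z : ι → ℝ} :
    z ∈ Icc (-1) 1 ↔ ∀ i, -1 ≤ z i ∧ z i ≤ 1 := by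
  simp only [mem_Icc, Pi.le_def, Pi.neg_apply, Pi.one_apply, forall_and]

lemma mem_Icc_neg_one_one_of_forall_eq_one_or_eq_neg_one {z : ι → ℝ}
    (hz : ∀ i, z i = 1 ∨ z i = -1) : z ∈ Icc (-1) 1 :=
  mem_Icc_neg_one_one_iff.2 fun i => by rcases hz i with h | h <;> rw [h] <;> norm_num

variable [Fintype ι]

noncomputable def quadObjective (Q : Matrix ι ι ℝ) (b x : ι → ℝ) : ℝ :=
  1 / 2 * (x ⬝ᵥ Q *ᵥ x) + b ⬝ᵥ x

lemma quadObjective_add {Q : Matrix ι ι ℝ} (hQ : Q.IsSymm) (b x d : ι → ℝ) :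
    quadObjective Q b (x + d) =
      quadObjective Q b x + (Q *ᵥ x + b) ⬝ᵥ d + 1 / 2 * (d ⬝ᵥ Q *ᵥ d) := by
  have hswap : x ⬝ᵥ Q *ᵥ d = d ⬝ᵥ Q *ᵥ x := by
    rw [← dotProduct_transpose_mulVec, hQ.eq]
  simp only [quadObjective, mulVec_add, dotProduct_add, add_dotProduct, hswap,
    dotProduct_comm (Q *ᵥ x) d, dotProduct_comm b d]
  ring

lemma single_dotProduct_mulVec_single [DecidableEq ι] (Q : Matrix ι ι ℝ) (i : ι) (c : ℝ) :
    Pi.single i c ⬝ᵥ Q *ᵥ Pi.single i c = c * Q i i * c := by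
  simp [mulVec_single, single_dotProduct]
  ring

lemma diagonal_mul_mul_diagonal_mulVec_one_add_apply {R : Type*} [CommRing R] [DecidableEq ι]
    (Q : Matrix ι ι R) (b x : ι → R) (i : ι) :
    ((diagonal x * Q * diagonal x) *ᵥ fun _ => 1) i + (diagonal x *ᵥ b) i =
      x i * (Q *ᵥ x + b) i := by
  have hx : diagonal x *ᵥ (fun _ => (1 : R)) = x := by
    funext j
    simp [mulVec_diagonal]
  rw [← mulVec_mulVec, ← mulVec_mulVec, hx, mulVec_diagonal, mulVec_diagonal, Pi.add_apply]
  ring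

lemma nonneg_of_forall_mul_add_sq_mul_nonneg {a c : ℝ}
    (h : ∀ t : ℝ, 0 < t → t ≤ 1 → 0 ≤ t * a + t ^ 2 * c) : 0 ≤ a := by
  by_contra! ha
  set t := min 1 (-a / (|c| + 1))
  have hc : 0 < |c| + 1 := by positivity
  have ht : 0 < t := lt_min one_pos (div_pos (neg_pos.2 ha) hc)
  have hta : t * (|c| + 1) ≤ -a := (le_div_iff₀ hc).1 (min_le_right _ _)
  have htc : t * c ≤ t * |c| := mul_le_mul_of_nonneg_left (le_abs_self c) ht.le
  have := h t ht (min_le_left _ _)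
  nlinarith

variable {Q : Matrix ι ι ℝ} {b x : ι → ℝ}

lemma isMinOn_quadObjective_Icc_of_mul_gradient_nonpos (hQ : Q.PosSemidef)
    (hx : ∀ i, x i = 1 ∨ x i = -1) (hg : ∀ i, x i * (Q *ᵥ x + b) i ≤ 0) :
    IsMinOn (quadObjective Q b) (Icc (-1) 1) x := by
  intro z hz
  have hz := mem_Icc_neg_one_one_iff.1 hz
  have hlin : 0 ≤ (Q *ᵥ x + b) ⬝ᵥ (z - x) := by
    refine Finset.sum_nonneg fun i _ => ?_
    have hxz : x i * z i - 1 ≤ 0 := by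
      rcases hx i with h | h <;> rw [h] <;> linarith [hz i]
    calc (0 : ℝ) ≤ (x i * (Q *ᵥ x + b) i) * (x i * z i - 1) :=
          mul_nonneg_of_nonpos_of_nonpos (hg i) hxz
      _ = (Q *ᵥ x + b) i * (z - x) i := by
          rw [Pi.sub_apply]
          linear_combination (Q *ᵥ x + b) i * z i * mul_self_eq_one_iff.2 (hx i)
  have hquad : 0 ≤ (z - x) ⬝ᵥ Q *ᵥ (z - x) := by
    simpa using hQ.dotProduct_mulVec_nonneg (z - x)
  have hexp := quadObjective_add (isHermitian_iff_isSymm.1 hQ.isHermitian) b x (z - x)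
  rw [add_sub_cancel] at hexp
  show quadObjective Q b x ≤ quadObjective Q b z
  linarith

lemma mul_gradient_nonpos_of_isMinOn_quadObjective_Icc (hQ : Q.IsSymm)
    (hx : ∀ i, x i = 1 ∨ x i = -1) (hmin : IsMinOn (quadObjective Q b) (Icc (-1) 1) x)
    (i : ι) :
    x i * (Q *ᵥ x + b) i ≤ 0 := by
  classical
  suffices 0 ≤ -2 * (x i * (Q *ᵥ x + b) i) by linarith
  refine nonneg_of_forall_mul_add_sq_mul_nonneg (c := 2 * Q i i) fun t ht0 ht1 => ?_
  have hmem : x + Pi.single i (-2 * t * x i) ∈ Icc (-1) 1 := by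
    refine mem_Icc_neg_one_one_iff.2 fun j => ?_
    rcases eq_or_ne j i with rfl | hji
    · simp only [Pi.add_apply, Pi.single_eq_same]
      rcases hx j with h | h <;> rw [h] <;> constructor <;> linarith
    · simpa only [Pi.add_apply, Pi.single_eq_of_ne hji, add_zero] using
        mem_Icc_neg_one_one_iff.1 (mem_Icc_neg_one_one_of_forall_eq_one_or_eq_neg_one hx) j
  have hle : quadObjective Q b x ≤ quadObjective Q b (x + Pi.single i (-2 * t * x i)) := hmin hmem
  rw [quadObjective_add hQ, dotProduct_single, single_dotProduct_mulVec_single] at hle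
  linear_combination hle + 2 * t ^ 2 * Q i i * mul_self_eq_one_iff.2 (hx i)

/-- For positive semidefinite `Q`, a point `x ∈ {−1,1}ⁿ` is simultaneously a global minimizer
of `f(x) = ½ xᵀQx + bᵀx` over `{−1,1}ⁿ` and over the box `[−1,1]ⁿ` if and only if
`X Q X e + X b ≤ 0` componentwise. -/
theorem stmt_10 {n : ℕ} (Q : Matrix (Fin n) (Fin n) ℝ) (hQ : Q.PosSemidef)
    (b : Fin n → ℝ) (x : Fin n → ℝ) (hx : ∀ i, x i = 1 ∨ x i = -1) :
    ((∀ z : Fin n → ℝ, (∀ i, z i = 1 ∨ z i = -1) →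
        (1 / 2) * (x ⬝ᵥ Q.mulVec x) + b ⬝ᵥ x ≤ (1 / 2) * (z ⬝ᵥ Q.mulVec z) + b ⬝ᵥ z) ∧
      (∀ z : Fin n → ℝ, (∀ i, -1 ≤ z i ∧ z i ≤ 1) →
        (1 / 2) * (x ⬝ᵥ Q.mulVec x) + b ⬝ᵥ x ≤ (1 / 2) * (z ⬝ᵥ Q.mulVec z) + b ⬝ᵥ z))
    ↔ ∀ i,
        (Matrix.diagonal x * Q * Matrix.diagonal x).mulVec (fun _ => (1 : ℝ)) i
            + (Matrix.diagonal x).mulVec b i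
          ≤ 0 := by
  have hsymm : Q.IsSymm := isHermitian_iff_isSymm.1 hQ.isHermitian
  simp only [diagonal_mul_mul_diagonal_mulVec_one_add_apply]
  constructor
  · rintro ⟨-, hmin⟩
    exact mul_gradient_nonpos_of_isMinOn_quadObjective_Icc hsymm hx
      fun z hz => hmin z (mem_Icc_neg_one_one_iff.1 hz)
  · intro hg
    have hmin := isMinOn_quadObjective_Icc_of_mul_gradient_nonpos hQ hx hg
    exact ⟨fun z hz => hmin (mem_Icc_neg_one_one_of_forall_eq_one_or_eq_neg_one hz),
      fun z hz => hmin (mem_Icc_neg_one_one_iff.2 hz)⟩
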